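/- arXiv:1807.02236 — 2 statements merged into one kernel-verified Lean document; each statement's English description precedes it below -/
import Mathlib

section
/- Let p ∈ ℝ^{d_A} and q ∈ ℝ^{d_B} be probability vectors (nonnegative entries summing to 1), and let G_1,…,G_m be pairwise disjoint sets whose union is {1,…,d_A}×{1,…,d_B}, such that each G_t contains at most one pair with any given second coordinate j. Then the vector r ∈ ℝ^m with entries r_t = Σ_{(i,j)∈G_t} p_i q_j is majorized by p. -/
open Matrix
open scoped Kronecker ComplexOrder

noncomputable section

/-- Sum of the `k` largest entries of `v` (zero-padding implicit for nonneg vectors):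
the maximum of `∑ i ∈ s, v i` over subsets `s` of cardinality at most `k`. -/
def topSum {ι : Type*} [Fintype ι] (v : ι → ℝ) (k : ℕ) : ℝ :=
  (Finset.univ.powerset.filter fun s => s.card ≤ k).sup' ⟨∅, by simp⟩ fun s => ∑ i ∈ s, v i

/-- `v ≺ w` (majorization, with implicit zero padding): every partial sum of the `k` largest
entries of `v` is at most that of `w`, and the total sums are equal. -/
def Majorizes {ι κ : Type*} [Fintype ι] [Fintype κ] (v : ι → ℝ) (w : κ → ℝ) : Prop :=
  (∀ k : ℕ, topSum v k ≤ topSum w k) ∧ (∑ i, v i = ∑ j, w j)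

/-- The operator norm (largest singular value) of a complex matrix. -/
def opNorm {m n : Type*} [Fintype m] [Fintype n] [DecidableEq n] (M : Matrix m n ℂ) : ℝ :=
  ‖LinearMap.toContinuousLinearMap (Matrix.toEuclideanLin M)‖

/-- `sCoef U k = s_k`: the maximum operator norm over all submatrices of `U` of class `k`,
i.e. obtained by selecting nonempty row/column sets `R`, `C` with `|R| + |C| = k + 1`. -/
def sCoef {d : ℕ} (U : Matrix (Fin d) (Fin d) ℂ) (k : ℕ) : ℝ :=
  sSup { r : ℝ | ∃ R C : Finset (Fin d), R.Nonempty ∧ C.Nonempty ∧ R.card + C.card = k + 1 ∧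
    r = opNorm (U.submatrix (fun i : {i // i ∈ R} => (i : Fin d))
                            (fun j : {j // j ∈ C} => (j : Fin d))) }

/-- The bound vector `ω^{X⊕Z} = (1, s_1, s_2 - s_1, …, s_d - s_{d-1}, 0, …, 0) ∈ ℝ^{2d}`.
(Note `sCoef U 0 = sSup ∅ = 0`, so the entry at index `1` is `s_1`.) -/
def omegaDS {d : ℕ} (U : Matrix (Fin d) (Fin d) ℂ) : Fin (2 * d) → ℝ := fun i =>
  if (i : ℕ) = 0 then 1
  else if (i : ℕ) ≤ d then sCoef U (i : ℕ) - sCoef U ((i : ℕ) - 1)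
  else 0

/-- A density matrix: positive semidefinite with unit trace. -/
def IsDensityMatrix {n : Type*} [Fintype n] (ρ : Matrix n n ℂ) : Prop :=
  ρ.PosSemidef ∧ ρ.trace = 1

/-- A family of vectors forming an orthonormal basis of `ℂ^d` (w.r.t. `⟨u, v⟩ = star u ⬝ᵥ v`). -/
def OrthonormalBasisVecs {d : ℕ} (x : Fin d → Fin d → ℂ) : Prop :=
  ∀ i j, star (x i) ⬝ᵥ x j = if i = j then 1 else 0

/-- Measurement distribution of a density matrix `ρ` in the basis `x`: `p i = ⟨x i, ρ (x i)⟩`. -/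
def measDist {d : ℕ} (x : Fin d → Fin d → ℂ) (ρ : Matrix (Fin d) (Fin d) ℂ) : Fin d → ℝ :=
  fun i => (star (x i) ⬝ᵥ (ρ *ᵥ x i)).re

/-- The tensor product of vectors. -/
def tensorVec {dA dB : ℕ} (u : Fin dA → ℂ) (v : Fin dB → ℂ) : Fin dA × Fin dB → ℂ :=
  fun ab => u ab.1 * v ab.2

/-- Joint measurement distribution of a bipartite density matrix `ρ` in the product basis
`{xA i ⊗ xB j}`: `p (i,j) = ⟨xA i ⊗ xB j, ρ (xA i ⊗ xB j)⟩`. -/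
def jointDist {dA dB : ℕ} (xA : Fin dA → Fin dA → ℂ) (xB : Fin dB → Fin dB → ℂ)
    (ρ : Matrix (Fin dA × Fin dB) (Fin dA × Fin dB) ℂ) : Fin dA × Fin dB → ℝ :=
  fun ij => (star (tensorVec (xA ij.1) (xB ij.2)) ⬝ᵥ (ρ *ᵥ tensorVec (xA ij.1) (xB ij.2))).re

open scoped Classical in
/-- The finite set of distinct values of the products `α i * β j`. -/
def valueSet {dA dB : ℕ} (α : Fin dA → ℝ) (β : Fin dB → ℝ) : Finset ℝ :=
  Finset.image (fun ij : Fin dA × Fin dB => α ij.1 * β ij.2) Finset.univ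

open scoped Classical in
/-- The grouped distribution of a joint distribution `p`, indexed by the distinct values `l`
of the products `α i * β j`, with entries `∑_{(i,j) : α i * β j = l} p (i,j)`. -/
def groupedDist {dA dB : ℕ} (α : Fin dA → ℝ) (β : Fin dB → ℝ)
    (p : Fin dA × Fin dB → ℝ) : valueSet α β → ℝ :=
  fun l => ∑ ij ∈ Finset.univ.filter (fun ij : Fin dA × Fin dB => α ij.1 * β ij.2 = (l : ℝ)), p ij

/-- Separability: `ρ` is a finite convex combination of tensor products of density matrices. -/
def IsSeparableState {dA dB : ℕ} (ρ : Matrix (Fin dA × Fin dB) (Fin dA × Fin dB) ℂ) : Prop :=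
  ∃ (K : ℕ) (lam : Fin K → ℝ) (σ : Fin K → Matrix (Fin dA) (Fin dA) ℂ)
    (τ : Fin K → Matrix (Fin dB) (Fin dB) ℂ),
    (∀ k, 0 ≤ lam k) ∧ (∑ k, lam k = 1) ∧
    (∀ k, IsDensityMatrix (σ k)) ∧ (∀ k, IsDensityMatrix (τ k)) ∧
    ρ = ∑ k, (lam k : ℂ) • (σ k ⊗ₖ τ k)


/-!
Take any `k` groups and split the pairs they contain according to the second coordinate `j`.
Since each group meets each such fibre at most once, a fibre holds at most `k` pairs, all with
distinct first coordinates, so its mass is at most `q j` times the sum of the `k` largest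
entries of `p`. Summing over `j` and using `∑ j, q j = 1` bounds the mass of the `k` groups.
-/

open Finset

section TopSum

variable {ι : Type*} [Fintype ι] (v : ι → ℝ) {k : ℕ}

theorem sum_le_topSum {s : Finset ι} (hs : #s ≤ k) : ∑ i ∈ s, v i ≤ topSum v k :=
  le_sup' (fun s : Finset ι => ∑ i ∈ s, v i) (by simpa using hs)

theorem topSum_le_iff {c : ℝ} : topSum v k ≤ c ↔ ∀ s : Finset ι, #s ≤ k → ∑ i ∈ s, v i ≤ c := by
  simp [topSum, sup'_le_iff]

theorem sum_comp_le_topSum [DecidableEq ι] {α : Type*} {F : Finset α} {f : α → ι}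
    (hf : Set.InjOn f F) (hF : #F ≤ k) : ∑ a ∈ F, v (f a) ≤ topSum v k := by
  rw [← sum_image hf]
  exact sum_le_topSum v (card_image_le.trans hF)

theorem sum_mul_le_topSum_mul_sum [DecidableEq ι] {κ : Type*} [Fintype κ] [DecidableEq κ]
    (w : κ → ℝ) (hw : ∀ j, 0 ≤ w j) (B : Finset (ι × κ))
    (hB : ∀ j, #{ij ∈ B | ij.2 = j} ≤ k) :
    ∑ ij ∈ B, v ij.1 * w ij.2 ≤ topSum v k * ∑ j, w j := by
  rw [← sum_fiberwise B Prod.snd, mul_sum]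
  gcongr with j
  have hj : ∀ ij ∈ {ij ∈ B | ij.2 = j}, ij.2 = j := fun ij h => (mem_filter.1 h).2
  have hfst : Set.InjOn Prod.fst (({ij ∈ B | ij.2 = j} : Finset (ι × κ)) : Set (ι × κ)) :=
    fun a ha b hb h => Prod.ext h ((hj a ha).trans (hj b hb).symm)
  calc ∑ ij ∈ B with ij.2 = j, v ij.1 * w ij.2
      = (∑ ij ∈ B with ij.2 = j, v ij.1) * w j := by
        rw [sum_mul]; exact sum_congr rfl fun ij h => by rw [hj ij h]
    _ ≤ topSum v k * w j :=
        mul_le_mul_of_nonneg_right (sum_comp_le_topSum v hfst (hB j)) (hw j)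

end TopSum

theorem card_filter_snd_biUnion_le {τ ι κ : Type*} [DecidableEq ι] [DecidableEq κ]
    {G : τ → Finset (ι × κ)} (hG : ∀ t, ∀ a ∈ G t, ∀ b ∈ G t, a.2 = b.2 → a = b)
    (s : Finset τ) (j : κ) : #{ij ∈ s.biUnion G | ij.2 = j} ≤ #s := by
  rw [filter_biUnion]
  refine (card_biUnion_le_card_mul _ _ 1 fun t _ => card_le_one.2 fun a ha b hb => ?_).trans_eq
    (mul_one _)
  exact hG t a (mem_filter.1 ha).1 b (mem_filter.1 hb).1
    ((mem_filter.1 ha).2.trans (mem_filter.1 hb).2.symm)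

theorem topSum_grouped_le {τ ι κ : Type*} [Fintype τ] [Fintype ι] [Fintype κ]
    [DecidableEq ι] [DecidableEq κ] (v : ι → ℝ) (w : κ → ℝ) (hw : ∀ j, 0 ≤ w j)
    (G : τ → Finset (ι × κ)) (hdisj : ∀ s t, s ≠ t → Disjoint (G s) (G t))
    (hG : ∀ t, ∀ a ∈ G t, ∀ b ∈ G t, a.2 = b.2 → a = b) (k : ℕ) :
    topSum (fun t => ∑ ij ∈ G t, v ij.1 * w ij.2) k ≤ topSum v k * ∑ j, w j := by
  refine (topSum_le_iff _).2 fun s hs => ?_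
  rw [← sum_biUnion fun a _ b _ hab => hdisj a b hab]
  exact sum_mul_le_topSum_mul_sum v w hw _ fun j =>
    (card_filter_snd_biUnion_le hG s j).trans hs

theorem grouped_product_majorized_left_general {dA dB m : ℕ} (p : Fin dA → ℝ) (q : Fin dB → ℝ)
    (hq : ∀ j, 0 ≤ q j)
    (hqs : ∑ j, q j = 1)
    (G : Fin m → Finset (Fin dA × Fin dB))
    (hdisj : ∀ s t, s ≠ t → Disjoint (G s) (G t))
    (hcover : ∀ ij : Fin dA × Fin dB, ∃ t, ij ∈ G t)
    (hsnd : ∀ t, ∀ a ∈ G t, ∀ b ∈ G t, a.2 = b.2 → a = b) :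
    Majorizes (fun t => ∑ ij ∈ G t, p ij.1 * q ij.2) p := by
  refine ⟨fun k => by simpa [hqs] using topSum_grouped_le p q hq G hdisj hsnd k, ?_⟩
  have hunion : univ.biUnion G = univ :=
    eq_univ_of_forall fun ij => mem_biUnion.2 (by simpa using hcover ij)
  rw [← sum_biUnion fun s _ t _ hst => hdisj s t hst, hunion, Fintype.sum_prod_type,
    ← Fintype.sum_mul_sum, hqs, mul_one]

/-- grouping the product distribution `(p_i q_j)` along pairwise disjoint groups
covering all pairs, each containing at most one pair with any given second coordinate, yields a
vector majorized by `p`. -/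
theorem grouped_product_majorized_left {dA dB m : ℕ} (p : Fin dA → ℝ) (q : Fin dB → ℝ)
    (hp : ∀ i, 0 ≤ p i) (hq : ∀ j, 0 ≤ q j)
    (hps : ∑ i, p i = 1) (hqs : ∑ j, q j = 1)
    (G : Fin m → Finset (Fin dA × Fin dB))
    (hdisj : ∀ s t, s ≠ t → Disjoint (G s) (G t))
    (hcover : ∀ ij : Fin dA × Fin dB, ∃ t, ij ∈ G t)
    (hsnd : ∀ t, ∀ a ∈ G t, ∀ b ∈ G t, a.2 = b.2 → a = b) :
    Majorizes (fun t => ∑ ij ∈ G t, p ij.1 * q ij.2) p :=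
  grouped_product_majorized_left_general p q hq hqs G hdisj hcover hsnd

end
end

section
/- Let {x_i^A}, {z_i^A} be orthonormal bases of ℂ^d with overlapping matrix U and coefficients s_1,…,s_d, and let {x_j^B}, {z_j^B} be orthonormal bases of ℂ^{d_B}. Then for every separable density matrix ρ on ℂ^d ⊗ ℂ^{d_B}, every k ∈ {1,…,d}, and all sets I, J of index pairs with |I| + |J| = k + 1, one has Σ_{(i,j)∈I} ⟨x_i^A ⊗ x_j^B, ρ (x_i^A ⊗ x_j^B)⟩ + Σ_{(m,n)∈J} ⟨z_m^A ⊗ z_n^B, ρ (z_m^A ⊗ z_n^B)⟩ ≤ 1 + s_k. -/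
/-!
Fix row and column sets `R`, `C` and a vector `φ`. Let `a`, `b` be the orthogonal projections
of `φ` onto the spans of `{x i | i ∈ R}` and `{z m | m ∈ C}`, and `P = ‖a‖²`, `Q = ‖b‖²` the
corresponding measurement weights. Then `P + Q = Re ⟪a + b, φ⟫ ≤ ‖a + b‖ ‖φ‖`, and `⟪a, b⟫` is the
form of the submatrix `U_{R,C}` on the coefficient vectors of `a` and `b`, so
`‖a + b‖² ≤ P + Q + 2 ‖U_{R,C}‖ √P √Q ≤ (1 + ‖U_{R,C}‖) (P + Q)`. Hence
`P + Q ≤ (1 + ‖U_{R,C}‖) ‖φ‖²`, which extends to density matrices `σ = Bᴴ B` by summing over the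
rows of `B`. For a product state `σ ⊗ τ` the weights of `I` and `J` are dominated by the
`σ`-weights of their first projections `R`, `C`, with `|R| + |C| ≤ k + 1`; enlarging `R` yields a
class-`k` submatrix. A separable state is a convex combination of product states.
-/

open Matrix
open scoped Kronecker ComplexOrder

noncomputable section

open ComplexConjugate

lemma norm_star_dotProduct_mulVec_le {m n : Type*} [Fintype m] [Fintype n] [DecidableEq n]
    (M : Matrix m n ℂ) (p : m → ℂ) (q : n → ℂ) :
    ‖star p ⬝ᵥ (M *ᵥ q)‖ ≤ ‖WithLp.toLp 2 p‖ * (opNorm M * ‖WithLp.toLp 2 q‖) := by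
  have h : star p ⬝ᵥ (M *ᵥ q) = inner ℂ (WithLp.toLp 2 p)
      (LinearMap.toContinuousLinearMap (toEuclideanLin M) (WithLp.toLp 2 q)) := by
    rw [dotProduct_comm]
    rfl
  rw [h]
  exact (norm_inner_le_norm _ _).trans
    (mul_le_mul_of_nonneg_left (ContinuousLinearMap.le_opNorm _ _) (norm_nonneg _))

section

variable {E : Type*} [NormedAddCommGroup E] [InnerProductSpace ℂ E]

lemma Orthonormal.norm_sum_smul_sq {ι : Type*} [Fintype ι] {x : ι → E} (hx : Orthonormal ℂ x)
    (c : ι → ℂ) : ‖∑ i, c i • x i‖ ^ 2 = ∑ i, ‖c i‖ ^ 2 := by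
  have h := hx.inner_sum c c Finset.univ
  rw [inner_self_eq_norm_sq_to_K] at h
  simp only [Complex.conj_mul'] at h
  exact Complex.ofReal_injective (by push_cast; exact h)

theorem Orthonormal.sum_norm_inner_sq_add_sum_le {ι κ : Type*} [Fintype ι] [Fintype κ]
    [DecidableEq κ] {x : ι → E} {z : κ → E} (hx : Orthonormal ℂ x) (hz : Orthonormal ℂ z)
    (φ : E) :
    ∑ i, ‖inner ℂ (x i) φ‖ ^ 2 + ∑ m, ‖inner ℂ (z m) φ‖ ^ 2
      ≤ (1 + opNorm (Matrix.of fun i m => inner ℂ (x i) (z m))) * ‖φ‖ ^ 2 := by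
  set s := opNorm (Matrix.of fun i m => inner ℂ (x i) (z m))
  set α : ι → ℂ := fun i => inner ℂ (x i) φ
  set β : κ → ℂ := fun m => inner ℂ (z m) φ
  set u := ‖WithLp.toLp 2 α‖
  set v := ‖WithLp.toLp 2 β‖
  set a := ∑ i, α i • x i
  set b := ∑ m, β m • z m
  have hs : 0 ≤ s := norm_nonneg _
  have hu : ∑ i, ‖α i‖ ^ 2 = u ^ 2 := (EuclideanSpace.norm_sq_eq (WithLp.toLp 2 _)).symm
  have hv : ∑ m, ‖β m‖ ^ 2 = v ^ 2 := (EuclideanSpace.norm_sq_eq (WithLp.toLp 2 _)).symm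
  have hφ : inner ℂ (a + b) φ = ((u ^ 2 + v ^ 2 : ℝ) : ℂ) := by
    simp only [a, b, inner_add_left, sum_inner, inner_smul_left]
    change ∑ i, conj (α i) * α i + ∑ m, conj (β m) * β m = _
    simp only [Complex.conj_mul', ← hu, ← hv]
    push_cast
    rfl
  have hab : ‖inner ℂ a b‖ ≤ u * (s * v) := by
    have : inner ℂ a b = star α ⬝ᵥ ((Matrix.of fun i m => inner ℂ (x i) (z m)) *ᵥ β) := by
      simp only [a, b, sum_inner, inner_sum, inner_smul_left, inner_smul_right, dotProduct,
        mulVec, Matrix.of_apply, Pi.star_apply, RCLike.star_def, Finset.mul_sum]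
      rw [Finset.sum_comm]
      exact Finset.sum_congr rfl fun i _ => Finset.sum_congr rfl fun m _ => by ring
    rw [this]
    exact norm_star_dotProduct_mulVec_le _ _ _
  have hsq : ‖a + b‖ ^ 2 ≤ (1 + s) * (u ^ 2 + v ^ 2) := by
    rw [@norm_add_sq ℂ, hx.norm_sum_smul_sq, hz.norm_sum_smul_sq, hu, hv]
    have := (RCLike.re_le_norm (inner ℂ a b)).trans hab
    nlinarith [sq_nonneg (u - v)]
  have hlin : u ^ 2 + v ^ 2 ≤ ‖a + b‖ * ‖φ‖ := by
    have := norm_inner_le_norm (𝕜 := ℂ) (a + b) φ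
    rwa [hφ, Complex.norm_real, Real.norm_of_nonneg (by positivity)] at this
  rw [hu, hv]
  nlinarith [norm_nonneg (a + b), norm_nonneg φ,
    mul_nonneg (add_nonneg hs zero_le_one) (sq_nonneg ‖φ‖)]

end

lemma IsDensityMatrix.exists_sum_norm_inner_sq {n : Type*} [Fintype n] {σ : Matrix n n ℂ}
    (hσ : IsDensityMatrix σ) :
    ∃ φ : n → EuclideanSpace ℂ n, ∑ r, ‖φ r‖ ^ 2 = 1 ∧
      ∀ v : n → ℂ, (star v ⬝ᵥ (σ *ᵥ v)).re = ∑ r, ‖inner ℂ (φ r) (WithLp.toLp 2 v)‖ ^ 2 := by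
  classical
  obtain ⟨B, rfl⟩ : ∃ B : Matrix n n ℂ, σ = star B * B := by
    open scoped MatrixOrder Matrix.Norms.L2Operator in
    exact CStarAlgebra.nonneg_iff_eq_star_mul_self.mp hσ.1.nonneg
  have hinner : ∀ r v, inner ℂ (WithLp.toLp 2 (star (B r))) (WithLp.toLp 2 v) = (B *ᵥ v) r := by
    intro r v
    rw [EuclideanSpace.inner_toLp_toLp, star_star, dotProduct_comm]
    rfl
  refine ⟨fun r => WithLp.toLp 2 (star (B r)), ?_, fun v => ?_⟩
  · have htr := congrArg Complex.re hσ.2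
    simp only [trace, diag, mul_apply, star_apply, RCLike.star_def, Complex.re_sum,
      Complex.conj_mul', ← Complex.ofReal_pow, Complex.ofReal_re, Complex.one_re] at htr
    rw [Finset.sum_comm] at htr
    simpa only [EuclideanSpace.norm_sq_eq, Pi.star_apply, RCLike.star_def, Complex.norm_conj]
      using htr
  · simp only [hinner]
    rw [← mulVec_mulVec, dotProduct_mulVec, star_eq_conjTranspose, vecMul_conjTranspose,
      dotProduct, Complex.re_sum]
    simp only [star_star, Pi.star_apply, RCLike.star_def, Complex.conj_mul', ← Complex.ofReal_pow,
      Complex.ofReal_re]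

lemma OrthonormalBasisVecs.orthonormal {d : ℕ} {x : Fin d → Fin d → ℂ}
    (hx : OrthonormalBasisVecs x) : Orthonormal ℂ fun i => WithLp.toLp 2 (x i) :=
  orthonormal_iff_ite.mpr fun i j => by
    rw [EuclideanSpace.inner_toLp_toLp, dotProduct_comm]
    exact hx i j

lemma measDist_nonneg {d : ℕ} (x : Fin d → Fin d → ℂ) {σ : Matrix (Fin d) (Fin d) ℂ}
    (hσ : σ.PosSemidef) (i : Fin d) : 0 ≤ measDist x σ i :=
  hσ.re_dotProduct_nonneg (x i)

lemma sum_measDist_le_one {d : ℕ} {x : Fin d → Fin d → ℂ} (hx : OrthonormalBasisVecs x)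
    {σ : Matrix (Fin d) (Fin d) ℂ} (hσ : IsDensityMatrix σ) (R : Finset (Fin d)) :
    ∑ i ∈ R, measDist x σ i ≤ 1 := by
  obtain ⟨φ, hφ, hmeas⟩ := hσ.exists_sum_norm_inner_sq
  calc ∑ i ∈ R, measDist x σ i
      = ∑ r, ∑ i ∈ R, ‖inner ℂ (WithLp.toLp 2 (x i)) (φ r)‖ ^ 2 := by
        simp only [measDist, hmeas, norm_inner_symm (φ _)]
        exact Finset.sum_comm
    _ ≤ ∑ r, ‖φ r‖ ^ 2 :=
        Finset.sum_le_sum fun r _ => hx.orthonormal.sum_inner_products_le (φ r)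
    _ = 1 := hφ

theorem sum_measDist_add_sum_measDist_le {d : ℕ} {x z : Fin d → Fin d → ℂ}
    (hx : OrthonormalBasisVecs x) (hz : OrthonormalBasisVecs z) {U : Matrix (Fin d) (Fin d) ℂ}
    (hU : ∀ i j, U i j = star (x i) ⬝ᵥ z j) {σ : Matrix (Fin d) (Fin d) ℂ}
    (hσ : IsDensityMatrix σ) (R C : Finset (Fin d)) :
    ∑ i ∈ R, measDist x σ i + ∑ m ∈ C, measDist z σ m
      ≤ 1 + opNorm (U.submatrix (fun i : {i // i ∈ R} => (i : Fin d))
          (fun j : {j // j ∈ C} => (j : Fin d))) := by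
  obtain ⟨φ, hφ, hmeas⟩ := hσ.exists_sum_norm_inner_sq
  have hU' : U.submatrix (fun i : {i // i ∈ R} => (i : Fin d)) (fun j : {j // j ∈ C} => (j : Fin d))
      = Matrix.of fun (i : R) (m : C) => inner ℂ (WithLp.toLp 2 (x i)) (WithLp.toLp 2 (z m)) := by
    ext i m
    rw [submatrix_apply, hU, of_apply, EuclideanSpace.inner_toLp_toLp, dotProduct_comm]
  have hpure := fun r => (hx.orthonormal.comp _ Subtype.val_injective).sum_norm_inner_sq_add_sum_le
    (hz.orthonormal.comp _ Subtype.val_injective) (ι := R) (κ := C) (φ r)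
  calc ∑ i ∈ R, measDist x σ i + ∑ m ∈ C, measDist z σ m
      = ∑ r, (∑ i : R, ‖inner ℂ (WithLp.toLp 2 (x i)) (φ r)‖ ^ 2
          + ∑ m : C, ‖inner ℂ (WithLp.toLp 2 (z m)) (φ r)‖ ^ 2) := by
        simp only [measDist, hmeas, norm_inner_symm (φ _), Finset.sum_add_distrib]
        rw [Finset.sum_comm (s := R), Finset.sum_comm (s := C)]
        congr 1 <;> refine Finset.sum_congr rfl fun r _ => (Finset.sum_coe_sort _ _).symm
    _ ≤ ∑ r, (1 + opNorm (U.submatrix (fun i : {i // i ∈ R} => (i : Fin d))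
          (fun j : {j // j ∈ C} => (j : Fin d)))) * ‖φ r‖ ^ 2 := by
        rw [hU']
        exact Finset.sum_le_sum fun r _ => hpure r
    _ = _ := by rw [← Finset.mul_sum, hφ, mul_one]

section SCoef

variable {d : ℕ} (U : Matrix (Fin d) (Fin d) ℂ)

lemma sCoef_nonneg (k : ℕ) : 0 ≤ sCoef U k :=
  Real.sSup_nonneg fun _ ⟨_, _, _, _, _, hr⟩ => hr ▸ norm_nonneg _

lemma opNorm_submatrix_le_sCoef {k : ℕ} {R C : Finset (Fin d)} (hR : R.Nonempty)
    (hC : C.Nonempty) (hRC : R.card + C.card = k + 1) :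
    opNorm (U.submatrix (fun i : {i // i ∈ R} => (i : Fin d))
      (fun j : {j // j ∈ C} => (j : Fin d))) ≤ sCoef U k := by
  refine le_csSup ?_ ⟨R, C, hR, hC, hRC, rfl⟩
  refine ((Set.finite_range fun RC : Finset (Fin d) × Finset (Fin d) =>
    opNorm (U.submatrix (fun i : {i // i ∈ RC.1} => (i : Fin d))
      (fun j : {j // j ∈ RC.2} => (j : Fin d)))).subset ?_).bddAbove
  rintro r ⟨R, C, -, -, -, rfl⟩
  exact ⟨(R, C), rfl⟩

end SCoef

theorem sum_measDist_add_sum_measDist_le_one_add_sCoef {d : ℕ} {x z : Fin d → Fin d → ℂ}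
    (hx : OrthonormalBasisVecs x) (hz : OrthonormalBasisVecs z) {U : Matrix (Fin d) (Fin d) ℂ}
    (hU : ∀ i j, U i j = star (x i) ⬝ᵥ z j) {σ : Matrix (Fin d) (Fin d) ℂ}
    (hσ : IsDensityMatrix σ) {k : ℕ} (hkd : k ≤ d) {R C : Finset (Fin d)}
    (hRC : R.card + C.card ≤ k + 1) :
    ∑ i ∈ R, measDist x σ i + ∑ m ∈ C, measDist z σ m ≤ 1 + sCoef U k := by
  obtain rfl | hR := R.eq_empty_or_nonempty
  · simpa using (sum_measDist_le_one hz hσ C).trans (le_add_of_nonneg_right (sCoef_nonneg U k))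
  obtain rfl | hC := C.eq_empty_or_nonempty
  · simpa using (sum_measDist_le_one hx hσ R).trans (le_add_of_nonneg_right (sCoef_nonneg U k))
  obtain ⟨R', hRR', hR'⟩ := Finset.exists_superset_card_eq (s := R) (n := k + 1 - C.card)
    (by omega) (by simp only [Fintype.card_fin]; have := hC.card_pos; omega)
  have hR'ne : R'.Nonempty := hR.mono hRR'
  calc ∑ i ∈ R, measDist x σ i + ∑ m ∈ C, measDist z σ m
      ≤ ∑ i ∈ R', measDist x σ i + ∑ m ∈ C, measDist z σ m := by
        gcongr
        exact fun i _ _ => measDist_nonneg x hσ.1 i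
    _ ≤ 1 + opNorm (U.submatrix (fun i : {i // i ∈ R'} => (i : Fin d))
          (fun j : {j // j ∈ C} => (j : Fin d))) :=
        sum_measDist_add_sum_measDist_le hx hz hU hσ R' C
    _ ≤ 1 + sCoef U k :=
        add_le_add_right (opNorm_submatrix_le_sCoef U hR'ne hC (by have := hC.card_pos; omega)) 1

lemma sum_mul_le_sum_image_fst {α β : Type*} [DecidableEq α] [Fintype β] {p : α → ℝ}
    {q : β → ℝ} (hp : ∀ a, 0 ≤ p a) (hq : ∀ b, 0 ≤ q b) (hq1 : ∑ b, q b ≤ 1)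
    (I : Finset (α × β)) :
    ∑ ab ∈ I, p ab.1 * q ab.2 ≤ ∑ a ∈ I.image Prod.fst, p a :=
  calc ∑ ab ∈ I, p ab.1 * q ab.2
      ≤ ∑ ab ∈ I.image Prod.fst ×ˢ Finset.univ, p ab.1 * q ab.2 :=
        Finset.sum_le_sum_of_subset_of_nonneg
          (fun ab h => Finset.mem_product.2 ⟨Finset.mem_image_of_mem _ h, Finset.mem_univ _⟩)
          fun ab _ _ => mul_nonneg (hp _) (hq _)
    _ = ∑ a ∈ I.image Prod.fst, p a * ∑ b, q b := by
        rw [Finset.sum_product]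
        simp only [Finset.mul_sum]
    _ ≤ ∑ a ∈ I.image Prod.fst, p a :=
        Finset.sum_le_sum fun a _ => mul_le_of_le_one_right (hp a) hq1

section TensorVec

variable {dA dB : ℕ}

lemma tensorVec_dotProduct_tensorVec (u u' : Fin dA → ℂ) (v v' : Fin dB → ℂ) :
    tensorVec u v ⬝ᵥ tensorVec u' v' = (u ⬝ᵥ u') * (v ⬝ᵥ v') := by
  simp only [dotProduct, tensorVec, Fintype.sum_prod_type, Finset.sum_mul_sum]
  exact Finset.sum_congr rfl fun a _ => Finset.sum_congr rfl fun b _ => mul_mul_mul_comm _ _ _ _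

lemma star_tensorVec (u : Fin dA → ℂ) (v : Fin dB → ℂ) :
    star (tensorVec u v) = tensorVec (star u) (star v) :=
  funext fun _ => star_mul' _ _

lemma kronecker_mulVec_tensorVec (M : Matrix (Fin dA) (Fin dA) ℂ) (N : Matrix (Fin dB) (Fin dB) ℂ)
    (u : Fin dA → ℂ) (v : Fin dB → ℂ) :
    (M ⊗ₖ N) *ᵥ tensorVec u v = tensorVec (M *ᵥ u) (N *ᵥ v) :=
  funext fun ab => tensorVec_dotProduct_tensorVec (M ab.1) u (N ab.2) v

end TensorVec

lemma jointDist_kronecker {dA dB : ℕ} (xA : Fin dA → Fin dA → ℂ) (xB : Fin dB → Fin dB → ℂ)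
    {σ : Matrix (Fin dA) (Fin dA) ℂ} (hσ : σ.IsHermitian) (τ : Matrix (Fin dB) (Fin dB) ℂ)
    (ij : Fin dA × Fin dB) :
    jointDist xA xB (σ ⊗ₖ τ) ij = measDist xA σ ij.1 * measDist xB τ ij.2 := by
  have him : (star (xA ij.1) ⬝ᵥ (σ *ᵥ xA ij.1)).im = 0 := hσ.im_star_dotProduct_mulVec_self _
  rw [jointDist, kronecker_mulVec_tensorVec, star_tensorVec, tensorVec_dotProduct_tensorVec,
    Complex.mul_re, him, zero_mul, sub_zero]
  rfl

lemma jointDist_sum_smul {dA dB : ℕ} (xA : Fin dA → Fin dA → ℂ) (xB : Fin dB → Fin dB → ℂ)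
    {ι : Type*} (s : Finset ι) (lam : ι → ℝ)
    (ρ : ι → Matrix (Fin dA × Fin dB) (Fin dA × Fin dB) ℂ) (ij : Fin dA × Fin dB) :
    jointDist xA xB (∑ t ∈ s, (lam t : ℂ) • ρ t) ij
      = ∑ t ∈ s, lam t * jointDist xA xB (ρ t) ij := by
  simp only [jointDist, sum_mulVec, smul_mulVec, dotProduct_sum, dotProduct_smul, Complex.re_sum,
    smul_eq_mul, Complex.re_ofReal_mul]

theorem sum_jointDist_add_sum_jointDist_kronecker_le {d dB : ℕ}
    {xA zA : Fin d → Fin d → ℂ} {xB zB : Fin dB → Fin dB → ℂ}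
    (hxA : OrthonormalBasisVecs xA) (hzA : OrthonormalBasisVecs zA)
    (hxB : OrthonormalBasisVecs xB) (hzB : OrthonormalBasisVecs zB)
    {U : Matrix (Fin d) (Fin d) ℂ} (hU : ∀ i j, U i j = star (xA i) ⬝ᵥ zA j)
    {σ : Matrix (Fin d) (Fin d) ℂ} (hσ : IsDensityMatrix σ)
    {τ : Matrix (Fin dB) (Fin dB) ℂ} (hτ : IsDensityMatrix τ)
    {k : ℕ} (hkd : k ≤ d) {I J : Finset (Fin d × Fin dB)} (hIJ : I.card + J.card = k + 1) :
    ∑ ij ∈ I, jointDist xA xB (σ ⊗ₖ τ) ij + ∑ mn ∈ J, jointDist zA zB (σ ⊗ₖ τ) mn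
      ≤ 1 + sCoef U k := by
  have hmarg : ∀ (x : Fin d → Fin d → ℂ) {y : Fin dB → Fin dB → ℂ}, OrthonormalBasisVecs y →
      ∀ K : Finset (Fin d × Fin dB),
        ∑ ij ∈ K, jointDist x y (σ ⊗ₖ τ) ij ≤ ∑ i ∈ K.image Prod.fst, measDist x σ i :=
    fun x y hy K => by
      simp only [jointDist_kronecker x y hσ.1.isHermitian]
      exact sum_mul_le_sum_image_fst (measDist_nonneg x hσ.1) (measDist_nonneg y hτ.1)
        (by simpa using sum_measDist_le_one hy hτ Finset.univ) K
  calc _ ≤ ∑ i ∈ I.image Prod.fst, measDist xA σ i + ∑ m ∈ J.image Prod.fst, measDist zA σ m :=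
        add_le_add (hmarg xA hxB I) (hmarg zA hzB J)
    _ ≤ 1 + sCoef U k :=
        sum_measDist_add_sum_measDist_le_one_add_sCoef hxA hzA hU hσ hkd
          (by have := I.card_image_le (f := Prod.fst)
              have := J.card_image_le (f := Prod.fst)
              omega)

theorem separable_scalar_detection_general {d dB : ℕ}
    (xA zA : Fin d → Fin d → ℂ) (xB zB : Fin dB → Fin dB → ℂ)
    (hxA : OrthonormalBasisVecs xA) (hzA : OrthonormalBasisVecs zA)
    (hxB : OrthonormalBasisVecs xB) (hzB : OrthonormalBasisVecs zB)
    (U : Matrix (Fin d) (Fin d) ℂ) (hU : ∀ i j, U i j = star (xA i) ⬝ᵥ zA j)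
    (ρ : Matrix (Fin d × Fin dB) (Fin d × Fin dB) ℂ)
    (hsep : IsSeparableState ρ)
    (k : ℕ) (hkd : k ≤ d)
    (I J : Finset (Fin d × Fin dB)) (hIJ : I.card + J.card = k + 1) :
    ∑ ij ∈ I, jointDist xA xB ρ ij + ∑ mn ∈ J, jointDist zA zB ρ mn ≤ 1 + sCoef U k := by
  obtain ⟨K, lam, σ, τ, hlam, hlam1, hσ, hτ, rfl⟩ := hsep
  calc _ = ∑ t, lam t * (∑ ij ∈ I, jointDist xA xB (σ t ⊗ₖ τ t) ij
          + ∑ mn ∈ J, jointDist zA zB (σ t ⊗ₖ τ t) mn) := by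
        simp only [jointDist_sum_smul, mul_add, Finset.mul_sum, Finset.sum_add_distrib]
        rw [Finset.sum_comm (s := I), Finset.sum_comm (s := J)]
    _ ≤ ∑ t, lam t * (1 + sCoef U k) := Finset.sum_le_sum fun t _ =>
        mul_le_mul_of_nonneg_left (sum_jointDist_add_sum_jointDist_kronecker_le hxA hzA hxB hzB hU
          (hσ t) (hτ t) hkd hIJ) (hlam t)
    _ = 1 + sCoef U k := by rw [← Finset.sum_mul, hlam1, one_mul]

/-- the scalar entanglement criteria. For every separable density matrix `ρ`, every
`k ∈ {1,…,d}` and all sets `I`, `J` of index pairs with `|I| + |J| = k + 1`, the joint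
measurement probabilities satisfy `∑_{(i,j)∈I} p(i,j) + ∑_{(m,n)∈J} q(m,n) ≤ 1 + s_k`. -/
theorem separable_scalar_detection {d dB : ℕ}
    (xA zA : Fin d → Fin d → ℂ) (xB zB : Fin dB → Fin dB → ℂ)
    (hxA : OrthonormalBasisVecs xA) (hzA : OrthonormalBasisVecs zA)
    (hxB : OrthonormalBasisVecs xB) (hzB : OrthonormalBasisVecs zB)
    (U : Matrix (Fin d) (Fin d) ℂ) (hU : ∀ i j, U i j = star (xA i) ⬝ᵥ zA j)
    (ρ : Matrix (Fin d × Fin dB) (Fin d × Fin dB) ℂ)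
    (hρ : IsDensityMatrix ρ) (hsep : IsSeparableState ρ)
    (k : ℕ) (hk1 : 1 ≤ k) (hkd : k ≤ d)
    (I J : Finset (Fin d × Fin dB)) (hIJ : I.card + J.card = k + 1) :
    ∑ ij ∈ I, jointDist xA xB ρ ij + ∑ mn ∈ J, jointDist zA zB ρ mn ≤ 1 + sCoef U k :=
  separable_scalar_detection_general xA zA xB zB hxA hzA hxB hzB U hU ρ hsep k hkd I J hIJ

end
end
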